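/- Let T > 0, Ω ⊂ ℝⁿ bounded open, ω ∈ 𝕊^{n−1}, and let v : [0,T]×Ω → ℂ be C¹, vanish on (0,T)×∂Ω, satisfy v(0,·) = 0, and have square-integrable directional derivative. If ε > 0 satisfies 1 − Tε² > 0, then ∫₀ᵀ∫_Ω |v|² dx dt ≤ (T/ε²)(1 − Tε²)⁻¹ ∫₀ᵀ∫_Ω |(∂_t − ω·∇_x)v|² dx dt. -/

import Mathlib

/-! Along the characteristic `s ↦ (s, x + (t - s) • ω)` the derivative of `v` is
`(∂ₜ - ω·∇ₓ) v`. Following it backwards from `(t, x)` until it leaves `Ω` or reaches `s = 0`,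
where `v` vanishes, the fundamental theorem of calculus and Cauchy–Schwarz bound `|v (t, x)|²`
by `T` times the integral of `|(∂ₜ - ω·∇ₓ) v|²` along the characteristic. Integrating over
`(t, x)` and swapping the integrals, translation invariance in `x` gives
`∫∫ |v|² ≤ T² ∫∫ |(∂ₜ - ω·∇ₓ) v|²` (so `|v|²` is integrable), and
`T² ≤ (T / ε²) (1 - T ε²)⁻¹` because `T ε² (1 - T ε²) ≤ 1 / 4`. -/

open MeasureTheory intervalIntegral Set
open scoped ENNReal

theorem sq_intervalIntegral_le_mul {g : ℝ → ℝ} {a b : ℝ} (hab : a ≤ b) (hg : Continuous g) :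
    (∫ s in a..b, g s) ^ 2 ≤ (b - a) * ∫ s in a..b, g s ^ 2 := by
  rcases hab.eq_or_lt with rfl | hlt
  · simp
  have hjensen := (Even.convexOn_pow (𝕜 := ℝ) even_two).map_set_average_le
    (continuous_pow 2).continuousOn isClosed_univ (μ := volume) (t := Ioc a b)
    (by simp [hlt]) (by simp) (by simp) hg.integrableOn_Ioc (hg.pow 2).integrableOn_Ioc
  have hL : 0 < b - a := sub_pos.mpr hlt
  simp only [setAverage_eq, measureReal_def, Real.volume_Ioc, ENNReal.toReal_ofReal hL.le,
    smul_eq_mul, ← div_eq_inv_mul, div_pow] at hjensen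
  rw [div_le_div_iff₀ (by positivity) hL] at hjensen
  rw [intervalIntegral.integral_of_le hab, intervalIntegral.integral_of_le hab]
  nlinarith

theorem exists_last_exit {X : Type*} [TopologicalSpace X] {U : Set X} (hU : IsOpen U)
    {γ : ℝ → X} (hγ : Continuous γ) {a t : ℝ} (hat : a ≤ t) (ht : γ t ∈ U) :
    ∃ s₀ ∈ Icc a t, (s₀ = a ∨ γ s₀ ∈ frontier U) ∧ ∀ s ∈ Ioc s₀ t, γ s ∈ U := by
  set S := Icc a t ∩ γ ⁻¹' Uᶜ
  rcases S.eq_empty_or_nonempty with hS | hS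
  · refine ⟨a, ⟨le_rfl, hat⟩, Or.inl rfl, fun s hs => ?_⟩
    by_contra hs'
    exact hS.subset ⟨⟨hs.1.le, hs.2⟩, hs'⟩
  have hbdd : BddAbove S := bddAbove_Icc.mono inter_subset_left
  obtain ⟨hs₀, hout⟩ : sSup S ∈ S :=
    (isClosed_Icc.inter (hU.isClosed_compl.preimage hγ)).csSup_mem hS hbdd
  have hinside : ∀ s ∈ Ioc (sSup S) t, γ s ∈ U := fun s hs => by
    by_contra hs'
    exact (le_csSup hbdd ⟨⟨hs₀.1.trans hs.1.le, hs.2⟩, hs'⟩).not_gt hs.1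
  have hlt : sSup S < t := hs₀.2.lt_of_ne fun h => hout (h ▸ ht)
  have hclosure : γ (sSup S) ∈ closure U :=
    mem_closure_of_tendsto (hγ.continuousWithinAt (s := Ioi (sSup S))) <|
      Filter.mem_of_superset (Ioo_mem_nhdsGT hlt) fun s hs => hinside s ⟨hs.1, hs.2.le⟩
  exact ⟨sSup S, hs₀, Or.inr (hU.frontier_eq ▸ ⟨hclosure, hout⟩), hinside⟩

theorem integrable_and_integral_le_of_lintegral_le {α : Type*} [MeasurableSpace α] {μ : Measure α}
    {f g : α → ℝ} (hf : AEStronglyMeasurable f μ) (hf0 : 0 ≤ f) (hg : Integrable g μ)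
    (hg0 : 0 ≤ g) {C : ℝ} (hC : 0 ≤ C)
    (h : ∫⁻ x, ENNReal.ofReal (f x) ∂μ ≤ ENNReal.ofReal C * ∫⁻ x, ENNReal.ofReal (g x) ∂μ) :
    Integrable f μ ∧ ∫ x, f x ∂μ ≤ C * ∫ x, g x ∂μ := by
  rw [← ofReal_integral_eq_lintegral_ofReal hg (ae_of_all _ hg0), ← ENNReal.ofReal_mul hC] at h
  have hfi : Integrable f μ :=
    ⟨hf, (hasFiniteIntegral_iff_ofReal (ae_of_all _ hf0)).2 (h.trans_lt ENNReal.ofReal_lt_top)⟩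
  refine ⟨hfi, ?_⟩
  rwa [← ofReal_integral_eq_lintegral_ofReal hfi (ae_of_all _ hf0),
    ENNReal.ofReal_le_ofReal_iff (mul_nonneg hC (integral_nonneg hg0))] at h

section Characteristics

variable {E F : Type*} [NormedAddCommGroup E] [NormedSpace ℝ E]
  [NormedAddCommGroup F] [NormedSpace ℝ F]

theorem hasDerivAt_comp_characteristic {v : ℝ × E → F} (hv : Differentiable ℝ v)
    (t : ℝ) (x ω : E) (s : ℝ) :
    HasDerivAt (fun s => v (s, x + (t - s) • ω)) (fderiv ℝ v (s, x + (t - s) • ω) (1, -ω)) s := by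
  have hline : HasDerivAt (fun s : ℝ => x + (t - s) • ω) (-ω) s := by
    simpa using (((hasDerivAt_id s).const_sub t).smul_const ω).const_add x
  exact (hv _).hasFDerivAt.comp_hasDerivAt s ((hasDerivAt_id s).prodMk hline)

theorem exists_sq_norm_le_integral_characteristic [CompleteSpace F] {v : ℝ × E → F}
    {Ω : Set E} (hΩ : IsOpen Ω) {T : ℝ} {ω : E} (hv : ContDiff ℝ 1 v)
    (hbd : ∀ t ∈ Icc 0 T, ∀ x ∈ frontier Ω, v (t, x) = 0) (hv0 : ∀ x, v (0, x) = 0)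
    {t : ℝ} {x : E} (ht : t ∈ Icc 0 T) (hx : x ∈ Ω) :
    ∃ s₀ ∈ Icc 0 t, (∀ s ∈ Ioc s₀ t, x + (t - s) • ω ∈ Ω) ∧ ‖v (t, x)‖ ^ 2 ≤
      (t - s₀) * ∫ s in s₀..t, ‖fderiv ℝ v (s, x + (t - s) • ω) (1, -ω)‖ ^ 2 := by
  set γ : ℝ → E := fun s => x + (t - s) • ω
  set f' : ℝ → F := fun s => fderiv ℝ v (s, γ s) (1, -ω)
  have hγ : Continuous γ := by fun_prop
  have hf' : Continuous f' :=
    ((hv.continuous_fderiv one_ne_zero).comp (continuous_id.prodMk hγ)).clm_apply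
      continuous_const
  obtain ⟨s₀, hs₀, hexit, hinside⟩ := exists_last_exit hΩ hγ ht.1 (by simpa [γ] using hx)
  have hvs₀ : v (s₀, γ s₀) = 0 := by
    rcases hexit with rfl | hfr
    · exact hv0 _
    · exact hbd s₀ ⟨hs₀.1, hs₀.2.trans ht.2⟩ _ hfr
  have hFTC : v (t, x) = ∫ s in s₀..t, f' s := by
    rw [intervalIntegral.integral_eq_sub_of_hasDerivAt
      (fun s _ => hasDerivAt_comp_characteristic (hv.differentiable one_ne_zero) t x ω s)
      (hf'.intervalIntegrable s₀ t)]
    simp [γ, hvs₀]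
  refine ⟨s₀, hs₀, hinside, ?_⟩
  calc ‖v (t, x)‖ ^ 2 ≤ (∫ s in s₀..t, ‖f' s‖) ^ 2 := by
        gcongr
        exact hFTC ▸ intervalIntegral.norm_integral_le_integral_norm hs₀.2
    _ ≤ (t - s₀) * ∫ s in s₀..t, ‖f' s‖ ^ 2 := sq_intervalIntegral_le_mul hs₀.2 hf'.norm

theorem ofReal_sq_norm_le_lintegral_characteristic [CompleteSpace F] {v : ℝ × E → F}
    {Ω : Set E} (hΩ : IsOpen Ω) {T : ℝ} {ω : E} (hv : ContDiff ℝ 1 v)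
    (hbd : ∀ t ∈ Icc 0 T, ∀ x ∈ frontier Ω, v (t, x) = 0) (hv0 : ∀ x, v (0, x) = 0)
    {t : ℝ} {x : E} (ht : t ∈ Icc 0 T) (hx : x ∈ Ω) :
    ENNReal.ofReal (‖v (t, x)‖ ^ 2) ≤ ENNReal.ofReal T * ∫⁻ s in Ioc 0 T, Ω.indicator
      (fun y => ENNReal.ofReal (‖fderiv ℝ v (s, y) (1, -ω)‖ ^ 2)) (x + (t - s) • ω) := by
  obtain ⟨s₀, hs₀, hinside, hsq⟩ :=
    exists_sq_norm_le_integral_characteristic (ω := ω) hΩ hv hbd hv0 ht hx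
  set D : ℝ → ℝ := fun s => ‖fderiv ℝ v (s, x + (t - s) • ω) (1, -ω)‖ ^ 2
  have hD : Continuous D := by
    have := hv.continuous_fderiv one_ne_zero
    fun_prop
  have hlintegral : ENNReal.ofReal (∫ s in s₀..t, D s) ≤ ∫⁻ s in Ioc 0 T, Ω.indicator
      (fun y => ENNReal.ofReal (‖fderiv ℝ v (s, y) (1, -ω)‖ ^ 2)) (x + (t - s) • ω) := by
    rw [intervalIntegral.integral_of_le hs₀.2, ofReal_integral_eq_lintegral_ofReal
      hD.integrableOn_Ioc (ae_of_all _ fun s => sq_nonneg _)]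
    calc ∫⁻ s in Ioc s₀ t, ENNReal.ofReal (D s)
        = ∫⁻ s in Ioc s₀ t, Ω.indicator
            (fun y => ENNReal.ofReal (‖fderiv ℝ v (s, y) (1, -ω)‖ ^ 2)) (x + (t - s) • ω) :=
          setLIntegral_congr_fun measurableSet_Ioc fun s hs => by
            rw [indicator_of_mem (hinside s hs)]
      _ ≤ _ := lintegral_mono_set (Ioc_subset_Ioc hs₀.1 ht.2)
  calc ENNReal.ofReal (‖v (t, x)‖ ^ 2)
      ≤ ENNReal.ofReal (t - s₀) * ENNReal.ofReal (∫ s in s₀..t, D s) := by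
        rw [← ENNReal.ofReal_mul (sub_nonneg.mpr hs₀.2)]
        exact ENNReal.ofReal_le_ofReal hsq
    _ ≤ _ := by
        gcongr
        linarith [hs₀.1, ht.2]

variable [MeasurableSpace E] [BorelSpace E]

theorem lintegral_lintegral_indicator_characteristic_le (μ : Measure E) [μ.IsAddRightInvariant]
    [SFinite μ] {g : ℝ × E → ℝ≥0∞} (hg : Measurable g) (I : Set ℝ) {Ω : Set E}
    (hΩ : MeasurableSet Ω) (ω : E) :
    ∫⁻ z in I ×ˢ Ω, (∫⁻ s in I, Ω.indicator (fun y => g (s, y)) (z.2 + (z.1 - s) • ω))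
        ∂(volume.prod μ)
      ≤ volume I * ∫⁻ z in I ×ˢ Ω, g z ∂(volume.prod μ) := by
  set G : ℝ × E → ℝ≥0∞ := fun p => Ω.indicator (fun y => g (p.1, y)) p.2
  have hG : Measurable G := by
    convert hg.indicator (MeasurableSet.univ.prod hΩ) using 1
    ext ⟨s, y⟩
    by_cases hy : y ∈ Ω <;> simp [G, hy]
  have hkernel : Measurable fun q : (ℝ × E) × ℝ => G (q.2, q.1.2 + (q.1.1 - q.2) • ω) :=
    hG.comp (by fun_prop :
      Continuous fun q : (ℝ × E) × ℝ => (q.2, q.1.2 + (q.1.1 - q.2) • ω)).measurable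
  have hslice : ∀ s, ∫⁻ z in I ×ˢ Ω, G (s, z.2 + (z.1 - s) • ω) ∂(volume.prod μ)
      ≤ volume I * ∫⁻ y in Ω, g (s, y) ∂μ := fun s =>
    calc ∫⁻ z in I ×ˢ Ω, G (s, z.2 + (z.1 - s) • ω) ∂(volume.prod μ)
        = ∫⁻ t in I, ∫⁻ x in Ω, G (s, x + (t - s) • ω) ∂μ := by
          rw [← Measure.prod_restrict, lintegral_prod (fun z => G (s, z.2 + (z.1 - s) • ω))
            (hkernel.comp (measurable_id.prodMk measurable_const)).aemeasurable]
      _ ≤ ∫⁻ t in I, ∫⁻ x, G (s, x + (t - s) • ω) ∂μ :=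
          lintegral_mono fun t => setLIntegral_le_lintegral _ _
      _ = ∫⁻ _ in I, ∫⁻ y in Ω, g (s, y) ∂μ := by
          simp_rw [lintegral_add_right_eq_self (fun x => G (s, x)), G,
            lintegral_indicator hΩ]
      _ = volume I * ∫⁻ y in Ω, g (s, y) ∂μ := by rw [setLIntegral_const, mul_comm]
  calc ∫⁻ z in I ×ˢ Ω, (∫⁻ s in I, G (s, z.2 + (z.1 - s) • ω)) ∂(volume.prod μ)
      = ∫⁻ s in I, ∫⁻ z in I ×ˢ Ω, G (s, z.2 + (z.1 - s) • ω) ∂(volume.prod μ) :=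
        lintegral_lintegral_swap (hkernel.comp measurable_id).aemeasurable
    _ ≤ ∫⁻ s in I, volume I * ∫⁻ y in Ω, g (s, y) ∂μ := lintegral_mono hslice
    _ = volume I * ∫⁻ z in I ×ˢ Ω, g z ∂(volume.prod μ) := by
        rw [lintegral_const_mul _ hg.lintegral_prod_right', ← Measure.prod_restrict,
          lintegral_prod _ hg.aemeasurable]

theorem lintegral_sq_norm_le_transport [CompleteSpace F] (μ : Measure E)
    [μ.IsAddRightInvariant] [SFinite μ] {v : ℝ × E → F} {Ω : Set E} (hΩ : IsOpen Ω) {T : ℝ}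
    (hT : 0 ≤ T) (ω : E) (hv : ContDiff ℝ 1 v)
    (hbd : ∀ t ∈ Icc 0 T, ∀ x ∈ frontier Ω, v (t, x) = 0) (hv0 : ∀ x, v (0, x) = 0) :
    ∫⁻ z in Ioc 0 T ×ˢ Ω, ENNReal.ofReal (‖v z‖ ^ 2) ∂(volume.prod μ)
      ≤ ENNReal.ofReal (T * T) *
        ∫⁻ z in Ioc 0 T ×ˢ Ω, ENNReal.ofReal (‖fderiv ℝ v z (1, -ω)‖ ^ 2) ∂(volume.prod μ) := by
  set D : ℝ × E → ℝ≥0∞ := fun z => ENNReal.ofReal (‖fderiv ℝ v z (1, -ω)‖ ^ 2)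
  have hD : Measurable D := ENNReal.measurable_ofReal.comp
    (((hv.continuous_fderiv one_ne_zero).clm_apply continuous_const).norm.pow 2).measurable
  calc ∫⁻ z in Ioc 0 T ×ˢ Ω, ENNReal.ofReal (‖v z‖ ^ 2) ∂(volume.prod μ)
      ≤ ∫⁻ z in Ioc 0 T ×ˢ Ω, ENNReal.ofReal T * (∫⁻ s in Ioc 0 T,
          Ω.indicator (fun y => D (s, y)) (z.2 + (z.1 - s) • ω)) ∂(volume.prod μ) :=
        setLIntegral_mono' (measurableSet_Ioc.prod hΩ.measurableSet) fun z hz =>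
          ofReal_sq_norm_le_lintegral_characteristic hΩ hv hbd hv0 (Ioc_subset_Icc_self hz.1) hz.2
    _ = ENNReal.ofReal T * ∫⁻ z in Ioc 0 T ×ˢ Ω, (∫⁻ s in Ioc 0 T,
          Ω.indicator (fun y => D (s, y)) (z.2 + (z.1 - s) • ω)) ∂(volume.prod μ) :=
        lintegral_const_mul' _ _ ENNReal.ofReal_ne_top
    _ ≤ ENNReal.ofReal T * (volume (Ioc 0 T) * ∫⁻ z in Ioc 0 T ×ˢ Ω, D z ∂(volume.prod μ)) := by
        gcongr
        exact lintegral_lintegral_indicator_characteristic_le μ hD _ hΩ.measurableSet ω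
    _ = ENNReal.ofReal (T * T) * ∫⁻ z in Ioc 0 T ×ˢ Ω, D z ∂(volume.prod μ) := by
        rw [Real.volume_Ioc, sub_zero, ENNReal.ofReal_mul hT, mul_assoc]

end Characteristics

theorem stmt4_general (n : ℕ) (T : ℝ) (hT : 0 < T)
    (Ω : Set (EuclideanSpace ℝ (Fin n))) (hΩo : IsOpen Ω)
    (ω : EuclideanSpace ℝ (Fin n))
    (v : ℝ × EuclideanSpace ℝ (Fin n) → ℂ)
    (hv : ContDiff ℝ 1 v)
    (hbd : ∀ t ∈ Set.Icc (0:ℝ) T, ∀ x ∈ frontier Ω, v (t, x) = 0)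
    (hv0 : ∀ x, v (0, x) = 0)
    (hint2 : IntegrableOn (fun p => ‖fderiv ℝ v p ((1:ℝ), -ω)‖ ^ 2)
      (Set.Icc (0:ℝ) T ×ˢ Ω) volume)
    (ε : ℝ) (hε : 0 < ε) (hsmall : 0 < 1 - T * ε ^ 2) :
    (∫ t in (0:ℝ)..T, ∫ x in Ω, ‖v (t, x)‖ ^ 2)
      ≤ (T / ε ^ 2) * (1 - T * ε ^ 2)⁻¹ *
        ∫ t in (0:ℝ)..T, ∫ x in Ω, ‖fderiv ℝ v (t, x) ((1:ℝ), -ω)‖ ^ 2 := by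
  have hDint := hint2.mono_set (prod_mono_left (Ioc_subset_Icc_self (a := 0) (b := T)))
  obtain ⟨hvint, hle⟩ := integrable_and_integral_le_of_lintegral_le
    (f := fun z => ‖v z‖ ^ 2) (hv.continuous.norm.pow 2).aestronglyMeasurable
    (fun _ => sq_nonneg _) hDint (fun _ => sq_nonneg _) (mul_self_nonneg T) (lintegral_sq_norm_le_transport volume hΩo hT.le ω hv hbd hv0)
  have hconst : T * T ≤ T / ε ^ 2 * (1 - T * ε ^ 2)⁻¹ := by
    rw [← div_eq_mul_inv, div_div, le_div_iff₀ (by positivity)]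
    nlinarith [mul_nonneg hT.le (sq_nonneg (2 * T * ε ^ 2 - 1))]
  rw [intervalIntegral.integral_of_le hT.le, intervalIntegral.integral_of_le hT.le,
    ← setIntegral_prod _ hvint, ← setIntegral_prod _ hDint]
  exact hle.trans (mul_le_mul_of_nonneg_right hconst (integral_nonneg fun _ => sq_nonneg _))

/-- Integrated transport Poincaré inequality: for scalar `v` C¹, vanishing on
the lateral boundary and at `t = 0`, and `ε > 0` with `1 − Tε² > 0`,
`∫₀ᵀ∫_Ω |v|² ≤ (T/ε²)(1 − Tε²)⁻¹ ∫₀ᵀ∫_Ω |(∂_t − ω·∇_x)v|²`. -/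
theorem stmt4 (n : ℕ) (T : ℝ) (hT : 0 < T)
    (Ω : Set (EuclideanSpace ℝ (Fin n))) (hΩo : IsOpen Ω)
    (hΩb : Bornology.IsBounded Ω)
    (ω : EuclideanSpace ℝ (Fin n)) (hω : ‖ω‖ = 1)
    (v : ℝ × EuclideanSpace ℝ (Fin n) → ℂ)
    (hv : ContDiff ℝ 1 v)
    (hbd : ∀ t ∈ Set.Icc (0:ℝ) T, ∀ x ∈ frontier Ω, v (t, x) = 0)
    (hv0 : ∀ x, v (0, x) = 0)
    (hint1 : IntegrableOn (fun p => ‖v p‖ ^ 2) (Set.Icc (0:ℝ) T ×ˢ Ω) volume)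
    (hint2 : IntegrableOn (fun p => ‖fderiv ℝ v p ((1:ℝ), -ω)‖ ^ 2)
      (Set.Icc (0:ℝ) T ×ˢ Ω) volume)
    (ε : ℝ) (hε : 0 < ε) (hsmall : 0 < 1 - T * ε ^ 2) :
    (∫ t in (0:ℝ)..T, ∫ x in Ω, ‖v (t, x)‖ ^ 2)
      ≤ (T / ε ^ 2) * (1 - T * ε ^ 2)⁻¹ *
        ∫ t in (0:ℝ)..T, ∫ x in Ω, ‖fderiv ℝ v (t, x) ((1:ℝ), -ω)‖ ^ 2 :=
  stmt4_general n T hT Ω hΩo ω v hv hbd hv0 hint2 ε hε hsmall
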